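/- arXiv:1906.01051 — 4 statements merged into one kernel-verified Lean document; each statement's English description precedes it below -/
import Mathlib

section
/- Let Z be a real-valued random variable on a probability space such that E[Z^k] exists for every integer k ≥ 1 and sup_{k ≥ 1} (1/k) |E[Z^k]|^{1/k} ≤ γ for some constant γ > 0. Then E[exp(Z/(2eγ))] ≤ 2. -/
open MeasureTheory

-- pointwise inequality for odd k
lemma aux_ptwise (k : ℕ) (hk : Odd k) {b : ℝ} (hb : 0 < b) (x : ℝ) :
    |x| ^ k ≤ x ^ (k + 1) / b + b ^ k := by
  have hev : x ^ (k+1) = |x| ^ (k+1) := by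
    rw [← abs_pow, abs_of_nonneg]
    exact (hk.add_one).pow_nonneg x
  rcases le_total |x| b with h | h
  · have h1 : |x| ^ k ≤ b ^ k := pow_le_pow_left₀ (abs_nonneg x) h k
    have h2 : 0 ≤ x ^ (k+1) / b := by
      rw [hev]; positivity
    linarith
  · have h1 : |x| ^ k ≤ x ^ (k+1) / b := by
      rw [le_div_iff₀ hb, hev, pow_succ]
      exact mul_le_mul_of_nonneg_left h (by positivity)
    have h2 : (0:ℝ) ≤ b ^ k := by positivity
    linarith

-- factorial bound
lemma aux_fact (k : ℕ) : ((k:ℝ)) ^ k ≤ (k.factorial : ℝ) * Real.exp 1 ^ k := by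
  have h := Real.pow_div_factorial_le_exp (x := (k:ℝ)) (Nat.cast_nonneg k) k
  rw [Real.exp_one_pow]
  rw [div_le_iff₀ (by positivity)] at h
  linarith [h]

lemma aux_onek (k : ℕ) (hk : 1 ≤ k) : (1 + 1/(k:ℝ)) ^ k ≤ Real.exp 1 := by
  have hk' : (0:ℝ) < k := by exact_mod_cast hk
  have h1 : 1 + 1/(k:ℝ) ≤ Real.exp (1/k) := by
    have := Real.add_one_le_exp (1/(k:ℝ)); linarith
  calc (1 + 1/(k:ℝ)) ^ k ≤ Real.exp (1/k) ^ k :=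
        pow_le_pow_left₀ (by positivity) h1 k
    _ = Real.exp 1 := by
        rw [← Real.exp_nat_mul]
        congr 1
        field_simp

-- the main numeric bound: for k ≥ 1, t ≥ 0, (γ t)^k / ((2eγ)^k k!) ≤ (t/(2k))^k
lemma aux_num {γ t : ℝ} (hγ : 0 < γ) (ht : 0 ≤ t) {k : ℕ} (hk : 1 ≤ k) :
    (γ * t) ^ k / ((2 * Real.exp 1 * γ) ^ k * k.factorial) ≤ (t / (2 * k)) ^ k := by
  have hk' : (0:ℝ) < k := by exact_mod_cast hk
  have he : (0:ℝ) < Real.exp 1 := Real.exp_pos 1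
  have hf : (0:ℝ) < k.factorial := by exact_mod_cast k.factorial_pos
  set A : ℝ := (t / (2 * Real.exp 1)) ^ k with hA
  have hA0 : 0 ≤ A := by positivity
  have h1 : (γ * t) ^ k / ((2 * Real.exp 1 * γ) ^ k * k.factorial) = A / k.factorial := by
    have key : γ * t / (2 * Real.exp 1 * γ) = t / (2 * Real.exp 1) := by
      field_simp
    rw [← div_div, ← div_pow, key]
  have h3 : (1:ℝ) ≤ Real.exp 1 ^ k / (k:ℝ) ^ k * k.factorial := by
    rw [div_mul_eq_mul_div, le_div_iff₀ (by positivity), one_mul]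
    calc ((k:ℝ)) ^ k ≤ (k.factorial : ℝ) * Real.exp 1 ^ k := aux_fact k
      _ = Real.exp 1 ^ k * k.factorial := by ring
  have h2 : A / k.factorial ≤ A * (Real.exp 1 ^ k / (k:ℝ) ^ k) := by
    rw [div_le_iff₀ hf]
    calc A = A * 1 := (mul_one A).symm
      _ ≤ A * (Real.exp 1 ^ k / (k:ℝ) ^ k * k.factorial) :=
          mul_le_mul_of_nonneg_left h3 hA0
      _ = A * (Real.exp 1 ^ k / (k:ℝ) ^ k) * k.factorial := by ring
  have h4 : A * (Real.exp 1 ^ k / (k:ℝ) ^ k) = (t / (2 * k)) ^ k := by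
    rw [hA, div_pow, div_pow, div_mul_div_comm, mul_pow, mul_pow]
    rw [div_eq_div_iff (by positivity) (by positivity)]
    ring
  rw [h1, ← h4]; exact h2

/-- If `Z` is a real random variable on a probability space all of whose
moments exist and satisfy `sup_{k ≥ 1} (1/k) |E[Z^k]|^{1/k} ≤ γ` for some `γ > 0`, then
`exp(Z/(2eγ))` is integrable with `E[exp(Z/(2eγ))] ≤ 2`. -/
theorem stmt_0 {Ω : Type*} [MeasurableSpace Ω] (μ : Measure Ω) [IsProbabilityMeasure μ]
    (Z : Ω → ℝ) (γ : ℝ) (hγ : 0 < γ)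
    (hint : ∀ k : ℕ, 1 ≤ k → Integrable (fun ω => (Z ω) ^ k) μ)
    (hmom : ∀ k : ℕ, 1 ≤ k →
      (1 / (k : ℝ)) * |∫ ω, (Z ω) ^ k ∂μ| ^ ((k : ℝ)⁻¹) ≤ γ) :
    Integrable (fun ω => Real.exp (Z ω / (2 * Real.exp 1 * γ))) μ ∧
      ∫ ω, Real.exp (Z ω / (2 * Real.exp 1 * γ)) ∂μ ≤ 2 := by
  set c : ℝ := 2 * Real.exp 1 * γ with hc_def
  have he : (0:ℝ) < Real.exp 1 := Real.exp_pos 1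
  have he1 : (1:ℝ) ≤ Real.exp 1 := by
    have := Real.add_one_le_exp (1:ℝ); linarith
  have hc : (0:ℝ) < c := by positivity
  have hZm : AEStronglyMeasurable Z μ := by
    have := (hint 1 le_rfl).1
    simpa using this
  -- moment bound
  have hb : ∀ k : ℕ, 1 ≤ k → |∫ ω, (Z ω) ^ k ∂μ| ≤ (γ * k) ^ k := by
    intro k hk
    have hk' : (0:ℝ) < k := by exact_mod_cast hk
    set I : ℝ := ∫ ω, (Z ω) ^ k ∂μ
    have h2 : |I| ^ ((k:ℝ)⁻¹) ≤ γ * k := by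
      have h := hmom k hk
      have h' := mul_le_mul_of_nonneg_left h hk'.le
      calc |I| ^ ((k:ℝ)⁻¹) = (k:ℝ) * (1 / (k:ℝ) * |I| ^ ((k:ℝ)⁻¹)) := by
            field_simp
        _ ≤ (k:ℝ) * γ := h'
        _ = γ * k := mul_comm _ _
    calc |I| = (|I| ^ ((k:ℝ)⁻¹)) ^ k := by
          rw [← Real.rpow_natCast (|I| ^ ((k:ℝ)⁻¹)) k, ← Real.rpow_mul (abs_nonneg _),
            inv_mul_cancel₀ (ne_of_gt hk'), Real.rpow_one]
      _ ≤ (γ * k) ^ k := pow_le_pow_left₀ (Real.rpow_nonneg (abs_nonneg _) _) h2 k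
  -- absolute moment bound
  have habs : ∀ k : ℕ, 1 ≤ k → Integrable (fun ω => |Z ω| ^ k) μ ∧
      ∫ ω, |Z ω| ^ k ∂μ ≤ 2 * (γ * ((k:ℝ) + 1)) ^ k := by
    intro k hk
    have hk' : (0:ℝ) < k := by exact_mod_cast hk
    have hb1 : (0:ℝ) < γ * ((k:ℝ) + 1) := by positivity
    have hγk : (γ * k) ^ k ≤ (γ * ((k:ℝ)+1)) ^ k :=
      pow_le_pow_left₀ (by positivity) (by nlinarith) k
    rcases Nat.even_or_odd k with hev | hodd
    · have hpt : (fun ω => |Z ω| ^ k) = fun ω => Z ω ^ k :=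
        funext fun ω => hev.pow_abs (Z ω)
      refine ⟨hpt ▸ hint k hk, ?_⟩
      rw [hpt]
      calc ∫ ω, Z ω ^ k ∂μ ≤ |∫ ω, Z ω ^ k ∂μ| := le_abs_self _
        _ ≤ (γ * k) ^ k := hb k hk
        _ ≤ (γ * ((k:ℝ)+1)) ^ k := hγk
        _ ≤ 2 * (γ * ((k:ℝ)+1)) ^ k := by nlinarith [pow_pos hb1 k]
    · set b : ℝ := γ * ((k:ℝ) + 1) with hbdef
      have hpt : ∀ ω, |Z ω| ^ k ≤ Z ω ^ (k+1) / b + b ^ k :=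
        fun ω => aux_ptwise k hodd hb1 (Z ω)
      have hint1 : Integrable (fun ω => Z ω ^ (k+1)) μ := hint (k+1) (by omega)
      have hint' : Integrable (fun ω => Z ω ^ (k+1) / b + b ^ k) μ :=
        (hint1.div_const b).add (integrable_const _)
      have hmeas : AEStronglyMeasurable (fun ω => |Z ω| ^ k) μ :=
        ((hZm.aemeasurable.norm.pow_const k)).aestronglyMeasurable
      have hI : Integrable (fun ω => |Z ω| ^ k) μ := by
        refine hint'.mono' hmeas (ae_of_all _ fun ω => ?_)
        rw [Real.norm_eq_abs, abs_of_nonneg (by positivity)]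
        exact hpt ω
      refine ⟨hI, ?_⟩
      have h3 : ∫ ω, Z ω ^ (k+1) ∂μ ≤ b ^ (k+1) := by
        refine le_trans (le_abs_self _) ?_
        have := hb (k+1) (by omega)
        have hcast : ((k+1 : ℕ) : ℝ) = (k:ℝ) + 1 := by push_cast; ring
        rwa [hcast] at this
      calc ∫ ω, |Z ω| ^ k ∂μ ≤ ∫ ω, (Z ω ^ (k+1) / b + b ^ k) ∂μ :=
            integral_mono hI hint' hpt
        _ = (∫ ω, Z ω ^ (k+1) ∂μ) / b + b ^ k := by
            rw [integral_add (hint1.div_const b) (integrable_const _),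
              integral_div, integral_const]
            simp
        _ ≤ b ^ (k+1) / b + b ^ k := by gcongr
        _ = 2 * b ^ k := by
            rw [pow_succ, mul_div_assoc, div_self (ne_of_gt hb1)]
            ring
  -- the series
  set F : ℕ → Ω → ℝ := fun k ω => (Z ω / c) ^ k / k.factorial with hF_def
  have hexp : ∀ y : ℝ, Real.exp y = ∑' n : ℕ, y ^ n / n.factorial := fun y => by
    rw [Real.exp_eq_exp_ℝ, NormedSpace.exp_eq_tsum_div]
  have hnorm : ∀ k ω, ‖F k ω‖ = |Z ω / c| ^ k / k.factorial := by
    intro k ω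
    rw [hF_def]
    rw [Real.norm_eq_abs, abs_div, abs_pow, Nat.abs_cast]
  have hsn : ∀ ω, Summable (fun k => ‖F k ω‖) := by
    intro ω
    refine (Real.summable_pow_div_factorial (|Z ω / c|)).congr fun k => ?_
    rw [hnorm]
  have hFint : ∀ k, Integrable (F k) μ := by
    intro k
    rcases Nat.eq_zero_or_pos k with rfl | hk
    · simp only [hF_def, pow_zero, Nat.factorial_zero, Nat.cast_one, div_one]
      exact integrable_const 1
    · have h := (hint k hk).mul_const ((c ^ k * k.factorial)⁻¹)
      refine h.congr (ae_of_all _ fun ω => ?_)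
      rw [hF_def]
      simp only
      rw [div_pow, div_div, div_eq_mul_inv]
  -- bound on the norm integrals
  have hFn : ∀ k, ∫ ω, ‖F k ω‖ ∂μ ≤ 2 * Real.exp 1 * (1/2) ^ k := by
    intro k
    have heq : ∫ ω, ‖F k ω‖ ∂μ = (∫ ω, |Z ω| ^ k ∂μ) * (c ^ k * k.factorial)⁻¹ := by
      rw [← integral_mul_const]
      congr 1
      funext ω
      rw [hnorm, abs_div, abs_of_pos hc, div_pow, div_div, div_eq_mul_inv]
    rcases Nat.eq_zero_or_pos k with rfl | hk
    · simp only [heq, pow_zero, Nat.factorial_zero, Nat.cast_one, mul_one, inv_one]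
      simp only [integral_const, measure_univ, probReal_univ, ENNReal.toReal_one, smul_eq_mul, one_mul, mul_one]
      linarith
    · have hk' : (0:ℝ) < k := by exact_mod_cast hk
      have hMk := (habs k hk).2
      have hnum := aux_num hγ (show (0:ℝ) ≤ (k:ℝ)+1 by positivity) hk (γ := γ) (t := (k:ℝ)+1)
      have hstep : (((k:ℝ)+1) / (2*(k:ℝ))) ^ k ≤ Real.exp 1 * (1/2) ^ k := by
        have h5 : ((k:ℝ)+1) / (2*(k:ℝ)) = (1 + 1/(k:ℝ)) * (1/2) := by
          field_simp
        rw [h5, mul_pow]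
        exact mul_le_mul_of_nonneg_right (aux_onek k hk) (by positivity)
      calc ∫ ω, ‖F k ω‖ ∂μ = (∫ ω, |Z ω| ^ k ∂μ) * (c ^ k * k.factorial)⁻¹ := heq
        _ ≤ 2 * (γ * ((k:ℝ)+1)) ^ k * (c ^ k * k.factorial)⁻¹ := by
            apply mul_le_mul_of_nonneg_right hMk (by positivity)
        _ = 2 * ((γ * ((k:ℝ)+1)) ^ k / (c ^ k * k.factorial)) := by
            rw [mul_assoc, div_eq_mul_inv]
        _ ≤ 2 * ((((k:ℝ)+1) / (2*(k:ℝ))) ^ k) := by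
            apply mul_le_mul_of_nonneg_left hnum (by norm_num)
        _ ≤ 2 * (Real.exp 1 * (1/2) ^ k) := by
            apply mul_le_mul_of_nonneg_left hstep (by norm_num)
        _ = 2 * Real.exp 1 * (1/2) ^ k := by ring
  have hgeom : Summable (fun k : ℕ => (1/2:ℝ) ^ k) :=
    summable_geometric_of_lt_one (by norm_num) (by norm_num)
  have hbndsum : Summable (fun k : ℕ => 2 * Real.exp 1 * (1/2:ℝ) ^ k) := hgeom.mul_left _
  have hFsum : Summable (fun k => ∫ ω, ‖F k ω‖ ∂μ) :=
    Summable.of_nonneg_of_le (fun k => integral_nonneg fun ω => norm_nonneg _)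
      (fun k => hFn k) hbndsum
  -- integrability
  have hBint : Integrable (fun ω => Real.exp (|Z ω / c|)) μ := by
    constructor
    · exact Real.continuous_exp.comp_aestronglyMeasurable ((hZm.aemeasurable.div_const c).aestronglyMeasurable.norm)
    · rw [hasFiniteIntegral_iff_ofReal (ae_of_all _ fun ω => (Real.exp_pos _).le)]
      have h1 : ∀ ω, ENNReal.ofReal (Real.exp (|Z ω / c|))
          = ∑' k, ENNReal.ofReal ‖F k ω‖ := by
        intro ω
        rw [hexp]
        rw [show (∑' n : ℕ, |Z ω / c| ^ n / n.factorial) = ∑' k, ‖F k ω‖ from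
          tsum_congr fun k => (hnorm k ω).symm]
        exact ENNReal.ofReal_tsum_of_nonneg (fun k => norm_nonneg _) (hsn ω)
      calc ∫⁻ ω, ENNReal.ofReal (Real.exp (|Z ω / c|)) ∂μ
          = ∫⁻ ω, ∑' k, ENNReal.ofReal ‖F k ω‖ ∂μ := by
            apply lintegral_congr fun ω => h1 ω
        _ = ∑' k, ∫⁻ ω, ENNReal.ofReal ‖F k ω‖ ∂μ :=
            lintegral_tsum fun k => ((hFint k).1.norm.aemeasurable).ennreal_ofReal
        _ = ∑' k, ENNReal.ofReal (∫ ω, ‖F k ω‖ ∂μ) := by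
            refine tsum_congr fun k => ?_
            rw [← ofReal_integral_eq_lintegral_ofReal (hFint k).norm
              (ae_of_all _ fun ω => norm_nonneg _)]
        _ ≤ ∑' k, ENNReal.ofReal (2 * Real.exp 1 * (1/2) ^ k) :=
            ENNReal.tsum_le_tsum fun k => ENNReal.ofReal_le_ofReal (hFn k)
        _ = ENNReal.ofReal (∑' ksum : ℕ, 2 * Real.exp 1 * (1/2) ^ ksum) :=
            (ENNReal.ofReal_tsum_of_nonneg (fun k => by positivity) hbndsum).symm
        _ < ⊤ := ENNReal.ofReal_lt_top
  have hgmeas : AEStronglyMeasurable (fun ω => Real.exp (Z ω / c)) μ :=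
    Real.continuous_exp.comp_aestronglyMeasurable (hZm.aemeasurable.div_const c).aestronglyMeasurable
  have hgint : Integrable (fun ω => Real.exp (Z ω / c)) μ := by
    refine hBint.mono' hgmeas (ae_of_all _ fun ω => ?_)
    rw [Real.norm_eq_abs, abs_of_pos (Real.exp_pos _)]
    exact Real.exp_le_exp.2 (le_abs_self _)
  refine ⟨hgint, ?_⟩
  -- value of the integral
  have hswap : ∑' k, ∫ ω, F k ω ∂μ = ∫ ω, Real.exp (Z ω / c) ∂μ := by
    rw [integral_tsum_of_summable_integral_norm hFint hFsum]
    congr 1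
    funext ω
    rw [hexp]
  have hIk : ∀ k, ∫ ω, F k ω ∂μ ≤ (1/2:ℝ) ^ k := by
    intro k
    rcases Nat.eq_zero_or_pos k with rfl | hk
    · simp only [hF_def, pow_zero, Nat.factorial_zero, Nat.cast_one, div_one,
        integral_const, measure_univ, probReal_univ, ENNReal.toReal_one, smul_eq_mul, one_mul]
      norm_num
    · have hk' : (0:ℝ) < k := by exact_mod_cast hk
      have heq : ∫ ω, F k ω ∂μ = (∫ ω, Z ω ^ k ∂μ) * (c ^ k * k.factorial)⁻¹ := by
        rw [← integral_mul_const]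
        congr 1
        funext ω
        rw [hF_def]
        simp only
        rw [div_pow, div_div, div_eq_mul_inv]
      have hnum := aux_num hγ (show (0:ℝ) ≤ (k:ℝ) by positivity) hk (γ := γ) (t := (k:ℝ))
      have hhalf : ((k:ℝ) / (2*(k:ℝ))) ^ k = (1/2:ℝ) ^ k := by
        congr 1
        rw [mul_comm, ← div_div, div_self (ne_of_gt hk')]
      calc ∫ ω, F k ω ∂μ = (∫ ω, Z ω ^ k ∂μ) * (c ^ k * k.factorial)⁻¹ := heq
        _ ≤ |∫ ω, Z ω ^ k ∂μ| * (c ^ k * k.factorial)⁻¹ :=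
            mul_le_mul_of_nonneg_right (le_abs_self _) (by positivity)
        _ ≤ (γ * k) ^ k * (c ^ k * k.factorial)⁻¹ :=
            mul_le_mul_of_nonneg_right (hb k hk) (by positivity)
        _ = (γ * k) ^ k / (c ^ k * k.factorial) := by rw [div_eq_mul_inv]
        _ ≤ ((k:ℝ) / (2*(k:ℝ))) ^ k := hnum
        _ = (1/2:ℝ) ^ k := hhalf
  have hIsummable : Summable (fun k => ∫ ω, F k ω ∂μ) :=
    Summable.of_norm_bounded hFsum fun k => norm_integral_le_integral_norm _
  calc ∫ ω, Real.exp (Z ω / c) ∂μ = ∑' k, ∫ ω, F k ω ∂μ := hswap.symm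
    _ ≤ ∑' k : ℕ, (1/2:ℝ) ^ k := Summable.tsum_le_tsum hIk hIsummable hgeom
    _ = (1 - 1/2)⁻¹ := tsum_geometric_of_lt_one (by norm_num) (by norm_num)
    _ = 2 := by norm_num
end

section
/- Let E and F be measurable spaces, let κ be a Markov kernel from E to F, and let μ, ν be probability measures on E. Denote by μκ and νκ the probability measures on F obtained by composing μ and ν with the kernel κ, i.e. (μκ)(A) = ∫_E κ(x)(A) dμ(x). Then H(μκ ‖ νκ) ≤ H(μ ‖ ν), where H denotes relative entropy (Kullback–Leibler divergence), valued in [0, +∞]. -/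
open MeasureTheory ProbabilityTheory
open scoped ENNReal Classical

/-- The relative entropy (Kullback–Leibler divergence) `H(μ ‖ ν) = ∫ log(dμ/dν) dμ` when
`μ ≪ ν` and the integral converges, and `+∞` otherwise; valued in `[0,∞]`. -/
noncomputable def relEntropy {Ω : Type*} [MeasurableSpace Ω] (μ ν : Measure Ω) : ℝ≥0∞ :=
  if μ ≪ ν ∧ Integrable (fun ω => Real.log ((μ.rnDeriv ν ω).toReal)) μ then
    ENNReal.ofReal (∫ ω, Real.log ((μ.rnDeriv ν ω).toReal) ∂μ)
  else ⊤

lemma relEntropy_map_le {Ω Ω' : Type*} [MeasurableSpace Ω] [MeasurableSpace Ω']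
    (μ ν : Measure Ω) [IsProbabilityMeasure μ] [IsProbabilityMeasure ν]
    {T : Ω → Ω'} (hT : Measurable T) :
    relEntropy (μ.map T) (ν.map T) ≤ relEntropy μ ν := by
  by_cases h : μ ≪ ν ∧ Integrable (fun ω => Real.log ((μ.rnDeriv ν ω).toReal)) μ
  swap
  · conv_rhs => rw [relEntropy, if_neg h]
    exact le_top
  obtain ⟨hac, hint⟩ := h
  have hint' := hint
  have hTμ : IsProbabilityMeasure (μ.map T) := Measure.isProbabilityMeasure_map hT.aemeasurable
  have hTν : IsProbabilityMeasure (ν.map T) := Measure.isProbabilityMeasure_map hT.aemeasurable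
  have hacT : μ.map T ≪ ν.map T := hac.map hT
  set f : Ω → ℝ≥0∞ := μ.rnDeriv ν with hf_def
  set g : Ω' → ℝ≥0∞ := (μ.map T).rnDeriv (ν.map T) with hg_def
  have hf_meas : Measurable f := μ.measurable_rnDeriv ν
  have hg_meas : Measurable g := (μ.map T).measurable_rnDeriv (ν.map T)
  set φ : Ω → ℝ := fun x => Real.log (f x).toReal with hφ_def
  set ψ' : Ω' → ℝ := fun y => Real.log (g y).toReal with hψ'_def
  have hψ'_meas : Measurable ψ' := hg_meas.ennreal_toReal.log
  -- a.e. facts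
  have hf_pos : ∀ᵐ x ∂μ, 0 < f x := Measure.rnDeriv_pos hac
  have hf_lt : ∀ᵐ x ∂μ, f x < ∞ := hac.ae_le (Measure.rnDeriv_lt_top μ ν)
  have hg_posT : ∀ᵐ y ∂(μ.map T), 0 < g y := Measure.rnDeriv_pos hacT
  have hg_ltT : ∀ᵐ y ∂(μ.map T), g y < ∞ := hacT.ae_le (Measure.rnDeriv_lt_top _ _)
  have hg_pos : ∀ᵐ x ∂μ, 0 < g (T x) := ae_of_ae_map hT.aemeasurable hg_posT
  have hg_lt : ∀ᵐ x ∂μ, g (T x) < ∞ := ae_of_ae_map hT.aemeasurable hg_ltT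
  -- the ratio
  set r : Ω → ℝ := fun x => (g (T x)).toReal / (f x).toReal with hr_def
  have hr_meas : Measurable r := (hg_meas.comp hT).ennreal_toReal.div hf_meas.ennreal_toReal
  have hr_nonneg : ∀ x, 0 ≤ r x := fun x => div_nonneg ENNReal.toReal_nonneg ENNReal.toReal_nonneg
  have h_gT_one : ∫⁻ x, g (T x) ∂ν = 1 := by
    rw [← lintegral_map hg_meas hT, Measure.lintegral_rnDeriv hacT]
    simp
  have hr_lint : ∫⁻ x, ENNReal.ofReal (r x) ∂μ ≤ 1 := by
    have hae : (fun x => ENNReal.ofReal (r x)) =ᵐ[μ] fun x => g (T x) / f x := by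
      filter_upwards [hf_pos, hf_lt, hg_lt] with x h1 h2 h3
      show ENNReal.ofReal ((g (T x)).toReal / (f x).toReal) = g (T x) / f x
      rw [← ENNReal.toReal_div, ENNReal.ofReal_toReal]
      exact (ENNReal.div_lt_top h3.ne h1.ne').ne
    have hmeas2 : AEMeasurable (fun x => g (T x) / f x) ν :=
      ((hg_meas.comp hT).div hf_meas).aemeasurable
    rw [lintegral_congr_ae hae, ← lintegral_rnDeriv_mul hac hmeas2]
    calc ∫⁻ x, μ.rnDeriv ν x * (g (T x) / f x) ∂ν
        ≤ ∫⁻ x, g (T x) ∂ν := lintegral_mono fun x => ENNReal.mul_div_le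
      _ = 1 := h_gT_one
  have hr_int : Integrable r μ := by
    refine ⟨hr_meas.aestronglyMeasurable, ?_⟩
    rw [hasFiniteIntegral_iff_ofReal (Filter.Eventually.of_forall hr_nonneg)]
    exact lt_of_le_of_lt hr_lint ENNReal.one_lt_top
  have hr_integral : ∫ x, r x ∂μ ≤ 1 := by
    rw [integral_eq_lintegral_of_nonneg_ae (Filter.Eventually.of_forall hr_nonneg)
      hr_meas.aestronglyMeasurable]
    exact ENNReal.toReal_le_of_le_ofReal zero_le_one (by simpa using hr_lint)
  -- pointwise inequality
  have hkey : ∀ᵐ x ∂μ, ψ' (T x) - φ x ≤ r x - 1 := by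
    filter_upwards [hf_pos, hf_lt, hg_pos, hg_lt] with x h1 h2 h3 h4
    have hfx : 0 < (f x).toReal := ENNReal.toReal_pos h1.ne' h2.ne
    have hgx : 0 < (g (T x)).toReal := ENNReal.toReal_pos h3.ne' h4.ne
    have : Real.exp (ψ' (T x) - φ x) = r x := by
      rw [hψ'_def, hφ_def, ← Real.log_div hgx.ne' hfx.ne', Real.exp_log (div_pos hgx hfx)]
    have h5 := Real.add_one_le_exp (ψ' (T x) - φ x)
    linarith [this ▸ h5]
  -- integrability of ψ' ∘ T
  have hbd_int : Integrable (fun x => |φ x| + r x) μ := hint.abs.add hr_int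
  have hpos_int : Integrable (fun x => max (ψ' (T x)) 0) μ := by
    refine Integrable.mono' hbd_int
      ((hψ'_meas.comp hT).max measurable_const).aestronglyMeasurable ?_
    filter_upwards [hkey] with x hx
    rw [Real.norm_eq_abs, abs_of_nonneg (le_max_right _ _)]
    have h0 := hr_nonneg x
    have habs := le_abs_self (φ x)
    have habs0 := abs_nonneg (φ x)
    rcases max_cases (ψ' (T x)) 0 with ⟨h1, _⟩ | ⟨h1, _⟩ <;> rw [h1] <;> linarith
  have hneg_intT : Integrable (fun y => max (-ψ' y) 0) (μ.map T) := by
    refine ⟨(hψ'_meas.neg.max measurable_const).aestronglyMeasurable, ?_⟩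
    have hnn : (0 : Ω' → ℝ) ≤ᵐ[μ.map T] (fun y => max (-ψ' y) 0) :=
      Filter.Eventually.of_forall fun y => le_max_right _ _
    rw [hasFiniteIntegral_iff_ofReal hnn]
    have hwd : μ.map T = (ν.map T).withDensity g := (Measure.withDensity_rnDeriv_eq _ _ hacT).symm
    rw [hwd, lintegral_withDensity_eq_lintegral_mul _ hg_meas
      (g := fun y => ENNReal.ofReal (max (-ψ' y) 0))
      ((hψ'_meas.neg.max measurable_const).ennreal_ofReal)]
    have hbound : ∀ᵐ y ∂(ν.map T), g y * ENNReal.ofReal (max (-ψ' y) 0) ≤ 1 := by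
      filter_upwards [Measure.rnDeriv_lt_top (μ.map T) (ν.map T)] with y hy
      rcases le_or_gt (ψ' y) 0 with hle | hlt
      · -- -ψ' y ≥ 0 ; bound t * (-log t) ≤ 1
        set t := (g y).toReal with ht_def
        have ht0 : 0 ≤ t := ENNReal.toReal_nonneg
        have hvle : t * max (-ψ' y) 0 ≤ 1 := by
          rcases eq_or_lt_of_le ht0 with h0 | h0
          · rw [← h0]; simp
          · have : -Real.log t ≤ 1/t - 1 := by
              have := Real.log_le_sub_one_of_pos (show (0:ℝ) < 1/t by positivity)
              rw [Real.log_div one_ne_zero h0.ne', Real.log_one] at this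
              linarith
            have hmax : max (-ψ' y) 0 ≤ max (1/t - 1) 0 := by
              apply max_le_max _ le_rfl
              simpa [hψ'_def] using this
            calc t * max (-ψ' y) 0 ≤ t * max (1/t - 1) 0 := by
                  exact mul_le_mul_of_nonneg_left hmax ht0
              _ ≤ 1 := by
                  rcases max_cases (1/t - 1) 0 with ⟨h1, h2⟩ | ⟨h1, _⟩ <;> rw [h1]
                  · rw [mul_sub, mul_one_div, div_self h0.ne']; linarith
                  · simp
        calc g y * ENNReal.ofReal (max (-ψ' y) 0)
            = ENNReal.ofReal (t * max (-ψ' y) 0) := by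
              rw [ENNReal.ofReal_mul ENNReal.toReal_nonneg, ENNReal.ofReal_toReal hy.ne]
          _ ≤ 1 := by simpa using ENNReal.ofReal_le_ofReal hvle
      · have : max (-ψ' y) 0 = 0 := max_eq_right (by linarith)
        simp [this]
    calc ∫⁻ y, g y * ENNReal.ofReal (max (-ψ' y) 0) ∂(ν.map T)
        ≤ ∫⁻ _, 1 ∂(ν.map T) := lintegral_mono_ae hbound
      _ < ∞ := by simp
  have hneg_int : Integrable (fun x => max (-ψ' (T x)) 0) μ := by
    have := (integrable_map_measure (hψ'_meas.neg.max measurable_const).aestronglyMeasurable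
      hT.aemeasurable).mp hneg_intT
    simpa [Function.comp_def] using this
  have hψT_int : Integrable (fun x => ψ' (T x)) μ := by
    have : (fun x => ψ' (T x)) = fun x => max (ψ' (T x)) 0 - max (-ψ' (T x)) 0 := by
      funext x; rw [max_zero_sub_max_neg_zero_eq_self]
    rw [this]
    exact hpos_int.sub hneg_int
  have hψ'_int : Integrable ψ' (μ.map T) :=
    (integrable_map_measure hψ'_meas.aestronglyMeasurable hT.aemeasurable).mpr
      (by simpa [Function.comp_def] using hψT_int)
  -- the integral inequality
  have hineq : ∫ y, ψ' y ∂(μ.map T) ≤ ∫ x, φ x ∂μ := by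
    rw [integral_map hT.aemeasurable hψ'_meas.aestronglyMeasurable]
    have hr1_int : Integrable (fun x => r x - 1) μ := hr_int.sub (integrable_const 1)
    have hsub_int : Integrable (fun x => ψ' (T x) - φ x) μ := hψT_int.sub hint
    have h1 : ∫ x, (ψ' (T x) - φ x) ∂μ ≤ ∫ x, (r x - 1) ∂μ := by
      refine integral_mono_ae hsub_int hr1_int hkey
    have h2 : ∫ x, (r x - 1) ∂μ = ∫ x, r x ∂μ - 1 := by
      rw [integral_sub hr_int (integrable_const 1)]
      simp
    have h3 : ∫ x, (ψ' (T x) - φ x) ∂μ = ∫ x, ψ' (T x) ∂μ - ∫ x, φ x ∂μ :=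
      integral_sub hψT_int hint
    linarith
  conv_rhs => rw [relEntropy, if_pos ⟨hac, hint'⟩]
  rw [relEntropy, if_pos ⟨hacT, hψ'_int⟩]
  exact ENNReal.ofReal_le_ofReal hineq

lemma compProd_eq_withDensity {E F : Type*} [MeasurableSpace E] [MeasurableSpace F]
    (κ : Kernel E F) [IsMarkovKernel κ]
    (μ ν : Measure E) [IsProbabilityMeasure μ] [IsProbabilityMeasure ν] (hac : μ ≪ ν) :
    μ ⊗ₘ κ = (ν ⊗ₘ κ).withDensity (fun p => μ.rnDeriv ν p.1) := by
  set f : E → ℝ≥0∞ := μ.rnDeriv ν with hf_def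
  have hf_meas : Measurable f := μ.measurable_rnDeriv ν
  ext s hs
  rw [withDensity_apply _ hs, Measure.compProd_apply hs]
  have h1 : ∫⁻ p in s, f p.1 ∂(ν ⊗ₘ κ)
      = ∫⁻ p, s.indicator (fun p => f p.1) p ∂(ν ⊗ₘ κ) := by
    rw [lintegral_indicator hs]
  have hmeas1 : Measurable (s.indicator (fun p : E × F => f p.1)) :=
    (hf_meas.comp measurable_fst).indicator hs
  rw [h1, Measure.lintegral_compProd hmeas1]
  have h2 : ∀ x, ∫⁻ y, s.indicator (fun p => f p.1) (x, y) ∂(κ x)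
      = f x * κ x (Prod.mk x ⁻¹' s) := by
    intro x
    have : ∀ y, s.indicator (fun p => f p.1) (x, y)
        = f x * (Prod.mk x ⁻¹' s).indicator (fun _ => (1 : ℝ≥0∞)) y := by
      intro y
      by_cases hy : (x, y) ∈ s <;>
        simp [Set.indicator_apply, hy, Set.mem_preimage]
    simp_rw [this]
    rw [lintegral_const_mul _ (measurable_const.indicator (measurable_prodMk_left hs))]
    rw [lintegral_indicator (measurable_prodMk_left hs)]
    simp
  simp_rw [h2]
  rw [← lintegral_rnDeriv_mul hac (Kernel.measurable_kernel_prodMk_left hs).aemeasurable]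

lemma relEntropy_compProd_le {E F : Type*} [MeasurableSpace E] [MeasurableSpace F]
    (κ : Kernel E F) [IsMarkovKernel κ]
    (μ ν : Measure E) [IsProbabilityMeasure μ] [IsProbabilityMeasure ν] :
    relEntropy (μ ⊗ₘ κ) (ν ⊗ₘ κ) ≤ relEntropy μ ν := by
  by_cases h : μ ≪ ν ∧ Integrable (fun ω => Real.log ((μ.rnDeriv ν ω).toReal)) μ
  swap
  · conv_rhs => rw [relEntropy, if_neg h]
    exact le_top
  obtain ⟨hac, hint⟩ := h
  set f : E → ℝ≥0∞ := μ.rnDeriv ν with hf_def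
  have hf_meas : Measurable f := μ.measurable_rnDeriv ν
  have hkey := compProd_eq_withDensity κ μ ν hac
  have hac2 : μ ⊗ₘ κ ≪ ν ⊗ₘ κ := by
    rw [hkey]; exact withDensity_absolutelyContinuous _ _
  have hrn : (μ ⊗ₘ κ).rnDeriv (ν ⊗ₘ κ) =ᵐ[ν ⊗ₘ κ] fun p => f p.1 := by
    rw [hkey]
    exact Measure.rnDeriv_withDensity _ (hf_meas.comp measurable_fst)
  have hrnμ : (μ ⊗ₘ κ).rnDeriv (ν ⊗ₘ κ) =ᵐ[μ ⊗ₘ κ] fun p => f p.1 := hac2.ae_le hrn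
  have haeeq : (fun p => Real.log (((μ ⊗ₘ κ).rnDeriv (ν ⊗ₘ κ) p).toReal))
      =ᵐ[μ ⊗ₘ κ] fun p => Real.log ((f p.1).toReal) := by
    filter_upwards [hrnμ] with p hp
    rw [hp]
  have hfst : (μ ⊗ₘ κ).map Prod.fst = μ := Measure.fst_compProd μ κ
  have hφmeas : Measurable (fun x => Real.log ((f x).toReal)) := hf_meas.ennreal_toReal.log
  have hint2 : Integrable (fun p : E × F => Real.log ((f p.1).toReal)) (μ ⊗ₘ κ) := by
    have := (integrable_map_measure hφmeas.aestronglyMeasurable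
      measurable_fst.aemeasurable (μ := μ ⊗ₘ κ)).mp (by rwa [hfst])
    simpa [Function.comp_def] using this
  have hint3 : Integrable (fun p => Real.log (((μ ⊗ₘ κ).rnDeriv (ν ⊗ₘ κ) p).toReal)) (μ ⊗ₘ κ) :=
    hint2.congr haeeq.symm
  have hI : ∫ p, Real.log (((μ ⊗ₘ κ).rnDeriv (ν ⊗ₘ κ) p).toReal) ∂(μ ⊗ₘ κ)
      = ∫ x, Real.log ((f x).toReal) ∂μ := by
    rw [integral_congr_ae haeeq]
    conv_rhs => rw [← hfst]
    rw [integral_map measurable_fst.aemeasurable hφmeas.aestronglyMeasurable]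
  rw [relEntropy, if_pos ⟨hac2, hint3⟩, relEntropy, if_pos ⟨hac, hint⟩, hI]

/-- data processing inequality.
For a Markov kernel `κ` from `E` to `F` and probability measures `μ, ν` on `E`,
`H(μκ ‖ νκ) ≤ H(μ ‖ ν)`, where `μκ = ∫ κ(x) dμ(x)` is the composition of `μ` with `κ`. -/
theorem stmt_8 {E F : Type*} [MeasurableSpace E] [MeasurableSpace F]
    (κ : Kernel E F) [IsMarkovKernel κ]
    (μ ν : Measure E) [IsProbabilityMeasure μ] [IsProbabilityMeasure ν] :
    relEntropy (μ.bind (fun x => κ x)) (ν.bind (fun x => κ x)) ≤ relEntropy μ ν := by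
  have hbind : ∀ (ρ : Measure E) [IsProbabilityMeasure ρ],
      ρ.bind (fun x => κ x) = (ρ ⊗ₘ κ).map Prod.snd := by
    intro ρ _
    ext s hs
    rw [Measure.bind_apply hs κ.measurable.aemeasurable,
      Measure.map_apply measurable_snd hs, Measure.compProd_apply (measurable_snd hs)]
    congr 1
  rw [hbind μ, hbind ν]
  exact (relEntropy_map_le (μ ⊗ₘ κ) (ν ⊗ₘ κ) measurable_snd).trans
    (relEntropy_compProd_le κ μ ν)
end

section
/- Fix d ≥ 1, n ≥ 1, N ≥ 2, indices k, l, k', l' ∈ S = {1, …, n}, and a nonnegative symmetric kernel Φ ∈ L¹(𝕋^d) ∩ L^∞(𝕋^d). Let ρ̄ be a strictly positive probability density on Π = 𝕋^d × S, write u_ξ(x) = ρ̄(x,ξ), and define: T̄⁻(ρ̄)(x,ξ) = −[ 1{ξ=k} (Φ*u_l)(x) u_k(x) + 1{ξ=l} (Φ*u_k)(x) u_l(x) ], T̄⁺(ρ̄)(x,ξ) = 1{ξ=k'} (Φ*u_l)(x) u_k(x) + 1{ξ=l'} (Φ*u_k)(x) u_l(x), T̄ = T̄⁻ + T̄⁺;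 the tensorized operator T̄_N(ρ̄^{⊗N})(y) = Σ_{i=1}^N T̄(ρ̄)(y_i) Π_{j≠i} ρ̄(y_j) for y = (y₁, …, y_N) ∈ Π^N; the adjoint jump operator (S*ψ)(x, ξ) = (1/N) Σ_{i≠j} Φ(x_i − x_j) [ 1{ξ_i = k'} 1{ξ_j = l'} ψ(x, Θ̃^{ij} ξ) − 1{ξ_i = k} 1{ξ_j = l} ψ(x, ξ) ], where Θ̃^{ij} ξ replaces the i-th and j-th coordinates of ξ by k and l; and A(x,ξ) = 1{ξ=l'} (Φ*u_k)(x) u_l(x) / ρ̄(x,ξ) − 1{ξ=l} (Φ*u_k)(x), Â(x,ξ) = 1{ξ=k'} (Φ*u_l)(x) u_k(x) / ρ̄(x,ξ) − 1{ξ=k} (Φ*u_l)(x), B((x,ξ),(x',ξ')) = Φ(x−x') [ 1{ξ=k'} 1{ξ'=l'} u_k(x) u_l(x') / (ρ̄(x,ξ) ρ̄(x',ξ')) − 1{ξ=k} 1{ξ'=l} ], f(y, y') = A(y') + Â(y) − B(y, y'). Then for every y ∈ Π^N: ( T̄_N(ρ̄^{⊗N})(y) − S*(ρ̄^{⊗N})(y)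 ) / ρ̄^{⊗N}(y) = (1/N) Σ_{i≠j} f(y_i, y_j) + (1/N) Σ_{i=1}^N [ A(y_i) + Â(y_i) ]. -/
open MeasureTheory
open scoped ENNReal

/-- The `d`-dimensional torus `𝕋^d`. -/
abbrev Torus (d : ℕ) := Fin d → UnitAddCircle

/-- Convolution on the torus: `(Φ*u)(x) = ∫ Φ(x−y) u(y) dy`. -/
noncomputable def conv (d : ℕ) (Φ u : Torus d → ℝ) (x : Torus d) : ℝ :=
  ∫ y, Φ (x - y) * u y

/-- The measure `m` on `Π = 𝕋^d × S`: Lebesgue measure times counting measure. -/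
noncomputable def mPi (d n : ℕ) : Measure (Torus d × Fin n) :=
  (volume : Measure (Torus d)).prod (Measure.count : Measure (Fin n))

/-- `A(x,ξ) = 1{ξ=l'} (Φ*u_k)(x) u_l(x) / ρ̄(x,ξ) − 1{ξ=l} (Φ*u_k)(x)`.
(The function `Â` of the paper is `Afun d n l k k'`.) -/
noncomputable def Afun (d n : ℕ) (k l l' : Fin n) (Φ : Torus d → ℝ)
    (ρ : Torus d × Fin n → ℝ) (y : Torus d × Fin n) : ℝ :=
  (if y.2 = l' then conv d Φ (fun z => ρ (z, k)) y.1 * ρ (y.1, l) / ρ y else 0) -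
    (if y.2 = l then conv d Φ (fun z => ρ (z, k)) y.1 else 0)

/-- `B((x,ξ),(x',ξ')) = Φ(x−x') [1{ξ=k'}1{ξ'=l'} u_k(x) u_l(x')/(ρ̄(x,ξ)ρ̄(x',ξ'))
− 1{ξ=k}1{ξ'=l}]`. -/
noncomputable def Bfun (d n : ℕ) (k l k' l' : Fin n) (Φ : Torus d → ℝ)
    (ρ : Torus d × Fin n → ℝ) (y y' : Torus d × Fin n) : ℝ :=
  Φ (y.1 - y'.1) *
    ((if y.2 = k' ∧ y'.2 = l' then ρ (y.1, k) * ρ (y'.1, l) / (ρ y * ρ y') else 0) -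
      (if y.2 = k ∧ y'.2 = l then 1 else 0))

/-- `F(y,y') = A(y') + Â(y) − B(y,y')`. -/
noncomputable def Ffun (d n : ℕ) (k l k' l' : Fin n) (Φ : Torus d → ℝ)
    (ρ : Torus d × Fin n → ℝ) (y y' : Torus d × Fin n) : ℝ :=
  Afun d n k l l' Φ ρ y' + Afun d n l k k' Φ ρ y - Bfun d n k l k' l' Φ ρ y y'

/-- The mean-field reaction operator `T̄ = T̄⁻ + T̄⁺` for the reaction `(k,l) → (k',l')`:
`T̄⁻(ρ̄)(x,ξ) = −[1{ξ=k}(Φ*u_l)(x)u_k(x) + 1{ξ=l}(Φ*u_k)(x)u_l(x)]`,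
`T̄⁺(ρ̄)(x,ξ) = 1{ξ=k'}(Φ*u_l)(x)u_k(x) + 1{ξ=l'}(Φ*u_k)(x)u_l(x)`. -/
noncomputable def Tbar (d n : ℕ) (k l k' l' : Fin n) (Φ : Torus d → ℝ)
    (ρ : Torus d × Fin n → ℝ) (y : Torus d × Fin n) : ℝ :=
  (-((if y.2 = k then conv d Φ (fun z => ρ (z, l)) y.1 * ρ (y.1, k) else 0) +
      (if y.2 = l then conv d Φ (fun z => ρ (z, k)) y.1 * ρ (y.1, l) else 0))) +
    ((if y.2 = k' then conv d Φ (fun z => ρ (z, l)) y.1 * ρ (y.1, k) else 0) +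
      (if y.2 = l' then conv d Φ (fun z => ρ (z, k)) y.1 * ρ (y.1, l) else 0))

/-- The tensorized density `ρ̄^{⊗N}(y) = Π_i ρ̄(y_i)`. -/
noncomputable def tensor (d n N : ℕ) (ρ : Torus d × Fin n → ℝ)
    (y : Fin N → Torus d × Fin n) : ℝ :=
  ∏ i : Fin N, ρ (y i)

/-- The tensorized reaction operator `T̄_N(ρ̄^{⊗N})(y) = Σ_i T̄(ρ̄)(y_i) Π_{j≠i} ρ̄(y_j)`. -/
noncomputable def TbarN (d n N : ℕ) (k l k' l' : Fin n) (Φ : Torus d → ℝ)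
    (ρ : Torus d × Fin n → ℝ) (y : Fin N → Torus d × Fin n) : ℝ :=
  ∑ i : Fin N, Tbar d n k l k' l' Φ ρ (y i) * ∏ j ∈ Finset.univ.erase i, ρ (y j)

/-- The adjoint jump operator applied to the tensorized density:
`S*(ρ̄^{⊗N})(y) = N⁻¹ Σ_{i≠j} Φ(x_i−x_j)[1{ξ_i=k'}1{ξ_j=l'} ρ̄^{⊗N}(x,Θ̃^{ij}ξ)
− 1{ξ_i=k}1{ξ_j=l} ρ̄^{⊗N}(y)]`. -/
noncomputable def SstarTensor (d n N : ℕ) (k l k' l' : Fin n) (Φ : Torus d → ℝ)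
    (ρ : Torus d × Fin n → ℝ) (y : Fin N → Torus d × Fin n) : ℝ :=
  (1 / (N : ℝ)) * ∑ i : Fin N, ∑ j : Fin N,
    if i ≠ j then
      Φ ((y i).1 - (y j).1) *
        ((if (y i).2 = k' ∧ (y j).2 = l' then
            tensor d n N ρ
              (Function.update (Function.update y i ((y i).1, k)) j ((y j).1, l))
          else 0) -
          (if (y i).2 = k ∧ (y j).2 = l then tensor d n N ρ y else 0))
    else 0

/-- pointwise decomposition of `(T̄_N − S*)(ρ̄^{⊗N}) / ρ̄^{⊗N}`. -/
theorem stmt_14 (d n N : ℕ) (hd : 1 ≤ d) (hn : 1 ≤ n) (hN : 2 ≤ N)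
    (k l k' l' : Fin n)
    (Φ : Torus d → ℝ) (hΦmeas : Measurable Φ) (hΦnonneg : ∀ x, 0 ≤ Φ x)
    (hΦsymm : ∀ x, Φ (-x) = Φ x)
    (hΦL1 : Integrable Φ volume) (hΦLinf : eLpNorm Φ ⊤ volume ≠ ⊤)
    (ρ : Torus d × Fin n → ℝ) (hρmeas : Measurable ρ) (hρpos : ∀ y, 0 < ρ y)
    (hρint : ∫ y, ρ y ∂(mPi d n) = 1)
    (y : Fin N → Torus d × Fin n) :
    (TbarN d n N k l k' l' Φ ρ y - SstarTensor d n N k l k' l' Φ ρ y) /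
        tensor d n N ρ y
      = (1 / (N : ℝ)) * (∑ i : Fin N, ∑ j : Fin N,
          if i ≠ j then Ffun d n k l k' l' Φ ρ (y i) (y j) else 0) +
        (1 / (N : ℝ)) * ∑ i : Fin N,
          (Afun d n k l l' Φ ρ (y i) + Afun d n l k k' Φ ρ (y i)) := by
  classical
  have hρne : ∀ z, ρ z ≠ 0 := fun z => (hρpos z).ne'
  have hNne : (N : ℝ) ≠ 0 := by
    have : 0 < N := lt_of_lt_of_le (by norm_num) hN
    exact_mod_cast this.ne'
  have hPpos : 0 < tensor d n N ρ y :=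
    Finset.prod_pos (fun i _ => hρpos (y i))
  have hPne : tensor d n N ρ y ≠ 0 := hPpos.ne'
  -- pointwise identity: Tbar = (A + Â) * ρ
  have key : ∀ z : Torus d × Fin n,
      Tbar d n k l k' l' Φ ρ z
        = (Afun d n k l l' Φ ρ z + Afun d n l k k' Φ ρ z) * ρ z := by
    rintro ⟨x, ξ⟩
    have h1 : ρ (x, l) ≠ 0 := hρne _
    have h2 : ρ (x, l') ≠ 0 := hρne _
    have h3 : ρ (x, k) ≠ 0 := hρne _
    have h4 : ρ (x, k') ≠ 0 := hρne _
    have h5 : ρ (x, ξ) ≠ 0 := hρne _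
    simp only [Tbar, Afun]
    split_ifs <;> subst_vars <;> field_simp <;> ring
  -- updated tensor
  have hupd : ∀ i j : Fin N, i ≠ j →
      tensor d n N ρ
        (Function.update (Function.update y i ((y i).1, k)) j ((y j).1, l))
        = ρ ((y i).1, k) * ρ ((y j).1, l) / (ρ (y i) * ρ (y j)) *
            tensor d n N ρ y := by
    intro i j hij
    have hmem : i ∈ Finset.univ.erase j :=
      Finset.mem_erase.mpr ⟨hij, Finset.mem_univ i⟩
    have hmem2 : i ∈ Finset.univ \ ({j} : Finset (Fin N)) := by
      simp [hij]
    have e1 : tensor d n N ρ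
        (Function.update (Function.update y i ((y i).1, k)) j ((y j).1, l))
        = ρ ((y j).1, l) * (ρ ((y i).1, k) *
            ∏ m ∈ (Finset.univ \ {j}) \ {i}, ρ (y m)) := by
      simp only [tensor]
      rw [show (fun m => ρ (Function.update (Function.update y i ((y i).1, k))
            j ((y j).1, l) m))
          = (fun m => Function.update
              (fun t => ρ (Function.update y i ((y i).1, k) t)) j
              (ρ ((y j).1, l)) m) from
          funext fun m => Function.apply_update (fun _ z => ρ z) _ j _ m]
      rw [Finset.prod_update_of_mem (Finset.mem_univ j)]
      congr 1
      rw [show (fun m => ρ (Function.update y i ((y i).1, k) m))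
          = (fun m => Function.update (fun t => ρ (y t)) i (ρ ((y i).1, k)) m) from
          funext fun m => Function.apply_update (fun _ z => ρ z) _ i _ m]
      rw [Finset.prod_update_of_mem hmem2]
    have e2 : tensor d n N ρ y
        = ρ (y j) * (ρ (y i) * ∏ m ∈ (Finset.univ \ {j}) \ {i}, ρ (y m)) := by
      simp only [tensor]
      rw [← Finset.mul_prod_erase _ (fun m => ρ (y m)) (Finset.mem_univ j),
        Finset.erase_eq,
        ← Finset.mul_prod_erase _ (fun m => ρ (y m)) hmem2, Finset.erase_eq]
    rw [e1, e2]
    have hi := hρne (y i)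
    have hj := hρne (y j)
    field_simp
  -- Claim A
  have hT : TbarN d n N k l k' l' Φ ρ y
      = (∑ i : Fin N, (Afun d n k l l' Φ ρ (y i) + Afun d n l k k' Φ ρ (y i))) *
          tensor d n N ρ y := by
    simp only [TbarN, tensor]
    rw [Finset.sum_mul]
    refine Finset.sum_congr rfl fun i _ => ?_
    rw [key (y i), mul_assoc,
      Finset.mul_prod_erase Finset.univ (fun j => ρ (y j)) (Finset.mem_univ i)]
  -- Claim B
  have hS : SstarTensor d n N k l k' l' Φ ρ y
      = (1 / (N : ℝ)) * ((∑ i : Fin N, ∑ j : Fin N,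
          if i ≠ j then Bfun d n k l k' l' Φ ρ (y i) (y j) else 0) *
            tensor d n N ρ y) := by
    simp only [SstarTensor]
    congr 1
    rw [Finset.sum_mul]
    refine Finset.sum_congr rfl fun i _ => ?_
    rw [Finset.sum_mul]
    refine Finset.sum_congr rfl fun j _ => ?_
    by_cases hij : i = j
    · simp [hij]
    · simp only [if_neg hij, hij, ne_eq, not_false_eq_true, if_true, Bfun]
      rw [hupd i j hij]
      have hi := hρne (y i)
      have hj := hρne (y j)
      split_ifs <;> field_simp <;> ring
  -- counting lemma
  have hcount : ∀ c : Fin N → ℝ,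
      (∑ i : Fin N, ∑ j : Fin N, if i ≠ j then c j else 0)
        = (N : ℝ) * (∑ j : Fin N, c j) - ∑ j : Fin N, c j := by
    intro c
    have h1 : ∀ i : Fin N, (∑ j : Fin N, if i ≠ j then c j else 0)
        = (∑ j : Fin N, c j) - c i := by
      intro i
      have e : ∀ j : Fin N, (if i ≠ j then c j else 0)
          = c j - (if i = j then c j else 0) := by
        intro j; by_cases h : i = j <;> simp [h]
      simp only [e]
      rw [Finset.sum_sub_distrib, Finset.sum_ite_eq]
      simp
    simp only [h1]
    rw [Finset.sum_sub_distrib, Finset.sum_const, Finset.card_univ,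
      Fintype.card_fin, nsmul_eq_mul]
  have hswap : ∀ c : Fin N → ℝ,
      (∑ i : Fin N, ∑ j : Fin N, if i ≠ j then c i else 0)
        = (N : ℝ) * (∑ j : Fin N, c j) - ∑ j : Fin N, c j := by
    intro c
    rw [Finset.sum_comm]
    rw [← hcount c]
    exact Finset.sum_congr rfl fun i _ => Finset.sum_congr rfl fun j _ => by
      simp [ne_comm]
  -- Claim C
  set SA : ℝ := ∑ i : Fin N, (Afun d n k l l' Φ ρ (y i) + Afun d n l k k' Φ ρ (y i))
    with hSA
  set S2 : ℝ := ∑ i : Fin N, ∑ j : Fin N,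
      if i ≠ j then Bfun d n k l k' l' Φ ρ (y i) (y j) else 0 with hS2
  have hF : (∑ i : Fin N, ∑ j : Fin N,
      if i ≠ j then Ffun d n k l k' l' Φ ρ (y i) (y j) else 0)
      = ((N : ℝ) * SA - SA) - S2 := by
    have e : ∀ i j : Fin N, (if i ≠ j then Ffun d n k l k' l' Φ ρ (y i) (y j) else 0)
        = ((if i ≠ j then Afun d n k l l' Φ ρ (y j) else 0) +
            (if i ≠ j then Afun d n l k k' Φ ρ (y i) else 0)) -
          (if i ≠ j then Bfun d n k l k' l' Φ ρ (y i) (y j) else 0) := by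
      intro i j
      by_cases h : i = j <;> simp [h, Ffun]
    simp only [e]
    simp only [Finset.sum_sub_distrib, Finset.sum_add_distrib]
    rw [← hS2]
    congr 1
    rw [hcount (fun j => Afun d n k l l' Φ ρ (y j)),
      hswap (fun i => Afun d n l k k' Φ ρ (y i))]
    rw [hSA, Finset.sum_add_distrib]
    ring
  rw [hT, hS, hF]
  field_simp
  ring
end

section
/- Fix d ≥ 1, n ≥ 1, p ∈ [1, ∞), indices k, l, k', l' ∈ S = {1, …, n}, and a nonnegative symmetric kernel Φ ∈ L¹(𝕋^d) ∩ L^∞(𝕋^d). For ρ ∈ L¹(Π,m) ∩ L^p(Π,m) write u_ξ(x) = ρ(x,ξ) and define T̄⁺(ρ)(x,ξ) = 1{ξ=k'} (Φ*u_l)(x) u_k(x) + 1{ξ=l'} (Φ*u_k)(x) u_l(x), and let ‖ρ‖_{X_p} = ‖ρ‖_{L¹(Π)} + ‖ρ‖_{L^p(Π)}. Then for all ρ, ρ̂ ∈ L¹(Π,m) ∩ L^p(Π,m), ‖T̄⁺(ρ) − T̄⁺(ρ̂)‖_{X_p} ≤ 4 ‖Φ‖_{L^∞(𝕋^d)} ·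 max{ ‖ρ‖_{X_p}, ‖ρ̂‖_{X_p} } · ‖ρ − ρ̂‖_{X_p}. -/
/-!
`T̄⁺(ρ) = B(ρ, ρ)` for the bilinear map `B(v, w) = 1{ξ=k'} (Φ*v_l) w_k + 1{ξ=l'} (Φ*v_k) w_l`,
so with `δ = ρ - ρ̂` we get `T̄⁺(ρ) - T̄⁺(ρ̂) = B(δ, ρ) + B(ρ̂, δ)`. Since `‖Φ*v‖_∞ ≤ ‖Φ‖_∞ ‖v‖₁`,
each of the four resulting products has `L^q(Π)`-norm at most `‖Φ‖_∞ ‖v‖₁ ‖w‖_q`, and a slice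
`u_ξ` has no larger norm than the function on `Π` it is cut from. Adding the estimates for
`q = 1` and `q = p` gives the factor `4`.
-/

open MeasureTheory
open scoped ENNReal

/-- `T̄⁺(ρ)(x,ξ) = 1{ξ=k'}(Φ*u_l)(x)u_k(x) + 1{ξ=l'}(Φ*u_k)(x)u_l(x)`. -/
noncomputable def Tplus (d n : ℕ) (k l k' l' : Fin n) (Φ : Torus d → ℝ)
    (ρ : Torus d × Fin n → ℝ) (y : Torus d × Fin n) : ℝ :=
  (if y.2 = k' then conv d Φ (fun z => ρ (z, l)) y.1 * ρ (y.1, k) else 0) +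
    (if y.2 = l' then conv d Φ (fun z => ρ (z, k)) y.1 * ρ (y.1, l) else 0)

/-- The `X_p`-norm `‖g‖_{X_p} = ‖g‖_{L¹(Π)} + ‖g‖_{L^p(Π)}` (with values in `[0,∞]`). -/
noncomputable def XpNorm (d n : ℕ) (p : ℝ) (g : Torus d × Fin n → ℝ) : ℝ≥0∞ :=
  eLpNorm g 1 (mPi d n) + eLpNorm g (ENNReal.ofReal p) (mPi d n)

instance Torus.isNegInvariant_volume (d : ℕ) : (volume : Measure (Torus d)).IsNegInvariant :=
  Pi.isNegInvariant_volume

instance Torus.isAddLeftInvariant_volume (d : ℕ) :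
    (volume : Measure (Torus d)).IsAddLeftInvariant :=
  Pi.isAddLeftInvariant_volume

section ProdCount

variable {α ι : Type*} [MeasurableSpace α] {μ : Measure α}
  [Fintype ι] [MeasurableSpace ι] [MeasurableSingletonClass ι]

theorem lintegral_prod_count {f : α × ι → ℝ≥0∞} (hf : Measurable f) :
    ∫⁻ y, f y ∂μ.prod Measure.count = ∑ i, ∫⁻ x, f (x, i) ∂μ := by
  rw [lintegral_prod _ hf.aemeasurable]
  simp_rw [lintegral_count, tsum_fintype]
  exact lintegral_finsetSum _ fun i _ => hf.comp measurable_prodMk_right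

theorem eLpNorm_prod_count_ite [DecidableEq ι] {q : ℝ≥0∞} (hq : q ≠ ⊤) (c : ι) {f : α → ℝ}
    (hf : Measurable f) :
    eLpNorm (fun y : α × ι => if y.2 = c then f y.1 else 0) q (μ.prod Measure.count) =
      eLpNorm f q μ := by
  rcases eq_or_ne q 0 with rfl | hq0
  · simp
  have hq_pos : 0 < q.toReal := ENNReal.toReal_pos hq0 hq
  have hF : Measurable fun y : α × ι => if y.2 = c then f y.1 else 0 :=
    (hf.comp measurable_fst).ite (measurable_snd (measurableSet_singleton c)) measurable_const
  simp_rw [eLpNorm_eq_lintegral_rpow_enorm_toReal hq0 hq]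
  rw [lintegral_prod_count (hF.enorm.pow_const _),
    Finset.sum_eq_single c (fun i _ hi => by simp [hi, ENNReal.zero_rpow_of_pos hq_pos]) (by simp)]
  simp

theorem eLpNorm_slice_le {q : ℝ≥0∞} (hq : q ≠ ⊤) (c : ι) {ρ : α × ι → ℝ} (hρ : Measurable ρ) :
    eLpNorm (fun x => ρ (x, c)) q μ ≤ eLpNorm ρ q (μ.prod Measure.count) := by
  classical
  rw [← eLpNorm_prod_count_ite hq c (f := fun x => ρ (x, c))
    (hρ.comp measurable_prodMk_right)]
  refine eLpNorm_mono fun y => ?_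
  split_ifs with h
  · rw [← h]
  · simp

end ProdCount

theorem ae_enorm_sub_le_eLpNorm_top {G E : Type*} [MeasurableSpace G] [AddGroup G]
    [MeasurableAdd G] [MeasurableNeg G] {μ : Measure G} [μ.IsAddLeftInvariant]
    [μ.IsNegInvariant] [NormedAddCommGroup E] (Φ : G → E) (x : G) :
    ∀ᵐ y ∂μ, ‖Φ (x - y)‖ₑ ≤ eLpNorm Φ ⊤ μ := by
  rw [eLpNorm_exponent_top]
  exact (Measure.measurePreserving_sub_left μ x).quasiMeasurePreserving.ae ae_le_eLpNormEssSup

section Convolution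

variable {d : ℕ} {Φ : Torus d → ℝ}

theorem enorm_conv_le {v : Torus d → ℝ} (hv : AEStronglyMeasurable v volume) (x : Torus d) :
    ‖conv d Φ v x‖ₑ ≤ eLpNorm Φ ⊤ volume * eLpNorm v 1 volume := by
  refine (enorm_integral_le_lintegral_enorm _).trans ?_
  rw [← eLpNorm_one_eq_lintegral_enorm]
  refine eLpNorm_le_mul_eLpNorm_of_ae_le_mul'' 1 hv ?_
  filter_upwards [ae_enorm_sub_le_eLpNorm_top Φ x] with y hy
  rw [enorm_mul]
  gcongr

theorem conv_sub (hΦ : MemLp Φ ⊤ volume) {u v : Torus d → ℝ} (hu : Integrable u)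
    (hv : Integrable v) (x : Torus d) :
    conv d Φ (u - v) x = conv d Φ u x - conv d Φ v x := by
  have hΦx : MemLp (fun y => Φ (x - y)) ⊤ volume :=
    hΦ.comp_measurePreserving (Measure.measurePreserving_sub_left volume x)
  simp only [conv, Pi.sub_apply, mul_sub]
  exact integral_sub (hu.mul_of_top_right hΦx) (hv.mul_of_top_right hΦx)

theorem measurable_conv (hΦ : Measurable Φ) {v : Torus d → ℝ} (hv : Measurable v) :
    Measurable (conv d Φ v) :=
  ((hΦ.comp (measurable_fst.sub measurable_snd)).mul
    (hv.comp measurable_snd)).stronglyMeasurable.integral_prod_right'.measurable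

end Convolution

noncomputable def convMulTerm (d n : ℕ) (Φ : Torus d → ℝ) (c : Fin n) (v w : Torus d → ℝ)
    (y : Torus d × Fin n) : ℝ :=
  if y.2 = c then conv d Φ v y.1 * w y.1 else 0

section ConvMulTerm

variable {d n : ℕ} {Φ : Torus d → ℝ}

theorem Tplus_eq_convMulTerm_add (k l k' l' : Fin n) (ρ : Torus d × Fin n → ℝ) :
    Tplus d n k l k' l' Φ ρ =
      convMulTerm d n Φ k' (fun x => ρ (x, l)) (fun x => ρ (x, k)) +
        convMulTerm d n Φ l' (fun x => ρ (x, k)) (fun x => ρ (x, l)) :=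
  rfl

theorem measurable_convMulTerm (hΦ : Measurable Φ) (c : Fin n) {v w : Torus d → ℝ}
    (hv : Measurable v) (hw : Measurable w) : Measurable (convMulTerm d n Φ c v w) :=
  ((measurable_conv hΦ hv).mul hw |>.comp measurable_fst).ite
    (measurable_snd (measurableSet_singleton c)) measurable_const

theorem convMulTerm_sub_convMulTerm (hΦ : MemLp Φ ⊤ volume) (c : Fin n) {v v' w w' : Torus d → ℝ}
    (hv : Integrable v) (hv' : Integrable v') :
    convMulTerm d n Φ c v w - convMulTerm d n Φ c v' w' =
      convMulTerm d n Φ c (v - v') w + convMulTerm d n Φ c v' (w - w') := by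
  ext y
  simp only [convMulTerm, Pi.add_apply, Pi.sub_apply, conv_sub hΦ hv hv']
  split_ifs <;> ring

theorem eLpNorm_convMulTerm_le (hΦ : Measurable Φ) {q : ℝ≥0∞} (hq : q ≠ ⊤) (c : Fin n)
    {v w : Torus d → ℝ} (hv : Measurable v) (hw : Measurable w) :
    eLpNorm (convMulTerm d n Φ c v w) q (mPi d n) ≤
      eLpNorm Φ ⊤ volume * eLpNorm v 1 volume * eLpNorm w q volume := by
  unfold convMulTerm mPi
  rw [eLpNorm_prod_count_ite hq c (f := fun x => conv d Φ v x * w x)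
    ((measurable_conv hΦ hv).mul hw)]
  exact eLpNorm_le_mul_eLpNorm_of_ae_le_mul'' q hw.aestronglyMeasurable
    (ae_of_all _ fun x => by rw [enorm_mul]; gcongr; exact enorm_conv_le hv.aestronglyMeasurable x)

theorem eLpNorm_convMulTerm_slice_le (hΦ : Measurable Φ) {q : ℝ≥0∞} (hq : q ≠ ⊤)
    (c i j : Fin n) {σ τ : Torus d × Fin n → ℝ} (hσ : Measurable σ) (hτ : Measurable τ) :
    eLpNorm (convMulTerm d n Φ c (fun x => σ (x, i)) (fun x => τ (x, j))) q (mPi d n) ≤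
      eLpNorm Φ ⊤ volume * (eLpNorm σ 1 (mPi d n) * eLpNorm τ q (mPi d n)) := by
  refine (eLpNorm_convMulTerm_le hΦ hq c (hσ.comp measurable_prodMk_right)
    (hτ.comp measurable_prodMk_right)).trans ?_
  rw [mul_assoc]
  gcongr
  exacts [eLpNorm_slice_le ENNReal.one_ne_top i hσ, eLpNorm_slice_le hq j hτ]

end ConvMulTerm

section Tplus

variable {d n : ℕ} {Φ : Torus d → ℝ} {ρ ρhat : Torus d × Fin n → ℝ}

theorem integrable_slice (hρ : Measurable ρ) (hρ1 : MemLp ρ 1 (mPi d n)) (c : Fin n) :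
    Integrable (fun x => ρ (x, c)) := by
  rw [← memLp_one_iff_integrable]
  exact ⟨(hρ.comp measurable_prodMk_right).aestronglyMeasurable,
    (eLpNorm_slice_le ENNReal.one_ne_top c hρ).trans_lt hρ1.2⟩

theorem Tplus_sub_Tplus (hΦ : MemLp Φ ⊤ volume) (k l k' l' : Fin n)
    (hρ : Measurable ρ) (hρhat : Measurable ρhat)
    (hρ1 : MemLp ρ 1 (mPi d n)) (hρhat1 : MemLp ρhat 1 (mPi d n)) :
    Tplus d n k l k' l' Φ ρ - Tplus d n k l k' l' Φ ρhat =
      (convMulTerm d n Φ k' (fun x => (ρ - ρhat) (x, l)) (fun x => ρ (x, k)) +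
          convMulTerm d n Φ k' (fun x => ρhat (x, l)) (fun x => (ρ - ρhat) (x, k))) +
        (convMulTerm d n Φ l' (fun x => (ρ - ρhat) (x, k)) (fun x => ρ (x, l)) +
          convMulTerm d n Φ l' (fun x => ρhat (x, k)) (fun x => (ρ - ρhat) (x, l))) := by
  have hslice := integrable_slice hρ hρ1
  have hslice_hat := integrable_slice hρhat hρhat1
  rw [Tplus_eq_convMulTerm_add, Tplus_eq_convMulTerm_add, add_sub_add_comm,
    convMulTerm_sub_convMulTerm hΦ k' (hslice l) (hslice_hat l),
    convMulTerm_sub_convMulTerm hΦ l' (hslice k) (hslice_hat k)]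
  rfl

theorem eLpNorm_Tplus_sub_Tplus_le (hΦ : Measurable Φ) (hΦ_top : eLpNorm Φ ⊤ volume ≠ ⊤)
    {q : ℝ≥0∞} (hq1 : 1 ≤ q) (hq : q ≠ ⊤) (k l k' l' : Fin n)
    (hρ : Measurable ρ) (hρhat : Measurable ρhat)
    (hρ1 : MemLp ρ 1 (mPi d n)) (hρhat1 : MemLp ρhat 1 (mPi d n)) :
    eLpNorm (Tplus d n k l k' l' Φ ρ - Tplus d n k l k' l' Φ ρhat) q (mPi d n) ≤
      2 * eLpNorm Φ ⊤ volume *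
        (eLpNorm (ρ - ρhat) 1 (mPi d n) * eLpNorm ρ q (mPi d n) +
          eLpNorm ρhat 1 (mPi d n) * eLpNorm (ρ - ρhat) q (mPi d n)) := by
  have hδ : Measurable (ρ - ρhat) := hρ.sub hρhat
  have hmeas : ∀ (c i j : Fin n) {σ τ : Torus d × Fin n → ℝ}, Measurable σ → Measurable τ →
      AEStronglyMeasurable (convMulTerm d n Φ c (fun x => σ (x, i)) (fun x => τ (x, j)))
        (mPi d n) := fun c i j _ _ hσ hτ =>
    (measurable_convMulTerm hΦ c (hσ.comp measurable_prodMk_right)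
      (hτ.comp measurable_prodMk_right)).aestronglyMeasurable
  rw [Tplus_sub_Tplus ⟨hΦ.aestronglyMeasurable, hΦ_top.lt_top⟩ k l k' l' hρ hρhat hρ1 hρhat1]
  set C := eLpNorm Φ ⊤ volume
  set μ := mPi d n
  calc _ ≤ (_ + _) + (_ + _) :=
        (eLpNorm_add_le ((hmeas k' l k hδ hρ).add (hmeas k' l k hρhat hδ))
          ((hmeas l' k l hδ hρ).add (hmeas l' k l hρhat hδ)) hq1).trans
        (add_le_add (eLpNorm_add_le (hmeas k' l k hδ hρ) (hmeas k' l k hρhat hδ) hq1)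
          (eLpNorm_add_le (hmeas l' k l hδ hρ) (hmeas l' k l hρhat hδ) hq1))
    _ ≤ (C * (eLpNorm (ρ - ρhat) 1 μ * eLpNorm ρ q μ) +
            C * (eLpNorm ρhat 1 μ * eLpNorm (ρ - ρhat) q μ)) +
          (C * (eLpNorm (ρ - ρhat) 1 μ * eLpNorm ρ q μ) +
            C * (eLpNorm ρhat 1 μ * eLpNorm (ρ - ρhat) q μ)) := by
        gcongr <;> exact eLpNorm_convMulTerm_slice_le hΦ hq _ _ _ ‹_› ‹_›
    _ = _ := by ring

end Tplus

theorem stmt_18_general (d n : ℕ)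
    (p : ℝ) (hp : 1 ≤ p) (k l k' l' : Fin n)
    (Φ : Torus d → ℝ) (hΦmeas : Measurable Φ)
    (hΦLinf : eLpNorm Φ ⊤ volume ≠ ⊤)
    (ρ ρhat : Torus d × Fin n → ℝ) (hρmeas : Measurable ρ) (hρhatmeas : Measurable ρhat)
    (hρL1 : MemLp ρ 1 (mPi d n))
    (hρhatL1 : MemLp ρhat 1 (mPi d n)) :
    XpNorm d n p
        (fun y => Tplus d n k l k' l' Φ ρ y - Tplus d n k l k' l' Φ ρhat y)
      ≤ 4 * eLpNorm Φ ⊤ volume *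
          max (XpNorm d n p ρ) (XpNorm d n p ρhat) *
          XpNorm d n p (fun y => ρ y - ρhat y) := by
  have hp' : 1 ≤ ENNReal.ofReal p := by simpa using ENNReal.ofReal_le_ofReal hp
  have bound := fun {q : ℝ≥0∞} (hq1 : 1 ≤ q) (hq : q ≠ ⊤) =>
    eLpNorm_Tplus_sub_Tplus_le hΦmeas hΦLinf hq1 hq k l k' l' hρmeas hρhatmeas hρL1 hρhatL1
  set M := max (XpNorm d n p ρ) (XpNorm d n p ρhat)
  have hρ_le : XpNorm d n p ρ ≤ M := le_max_left _ _
  have hρhat_le : eLpNorm ρhat 1 (mPi d n) ≤ M := le_self_add.trans (le_max_right _ _)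
  calc XpNorm d n p (Tplus d n k l k' l' Φ ρ - Tplus d n k l k' l' Φ ρhat)
      ≤ 2 * eLpNorm Φ ⊤ volume *
          (eLpNorm (ρ - ρhat) 1 (mPi d n) * XpNorm d n p ρ +
            eLpNorm ρhat 1 (mPi d n) * XpNorm d n p (ρ - ρhat)) := by
        unfold XpNorm
        grw [bound le_rfl ENNReal.one_ne_top, bound hp' ENNReal.ofReal_ne_top]
        exact le_of_eq (by ring)
    _ ≤ 2 * eLpNorm Φ ⊤ volume *
          (XpNorm d n p (ρ - ρhat) * M + M * XpNorm d n p (ρ - ρhat)) := by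
        gcongr
        exact le_self_add
    _ = 4 * eLpNorm Φ ⊤ volume * M * XpNorm d n p (ρ - ρhat) := by ring

/-- local Lipschitz bound for `T̄⁺` in the `X_p`-norm. -/
theorem stmt_18 (d n : ℕ) (hd : 1 ≤ d) (hn : 1 ≤ n)
    (p : ℝ) (hp : 1 ≤ p) (k l k' l' : Fin n)
    (Φ : Torus d → ℝ) (hΦmeas : Measurable Φ) (hΦnonneg : ∀ x, 0 ≤ Φ x)
    (hΦsymm : ∀ x, Φ (-x) = Φ x)
    (hΦL1 : Integrable Φ volume) (hΦLinf : eLpNorm Φ ⊤ volume ≠ ⊤)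
    (ρ ρhat : Torus d × Fin n → ℝ) (hρmeas : Measurable ρ) (hρhatmeas : Measurable ρhat)
    (hρL1 : MemLp ρ 1 (mPi d n)) (hρLp : MemLp ρ (ENNReal.ofReal p) (mPi d n))
    (hρhatL1 : MemLp ρhat 1 (mPi d n))
    (hρhatLp : MemLp ρhat (ENNReal.ofReal p) (mPi d n)) :
    XpNorm d n p
        (fun y => Tplus d n k l k' l' Φ ρ y - Tplus d n k l k' l' Φ ρhat y)
      ≤ 4 * eLpNorm Φ ⊤ volume *
          max (XpNorm d n p ρ) (XpNorm d n p ρhat) *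
          XpNorm d n p (fun y => ρ y - ρhat y) :=
  stmt_18_general d n p hp k l k' l' Φ hΦmeas hΦLinf ρ ρhat hρmeas hρhatmeas hρL1 hρhatL1
end
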